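/- arXiv:0803.2105 — 4 statements merged into one kernel-verified Lean document; each statement's English description precedes it below -/
import Mathlib

section
/- If a p-adic integer α is the image of a rational number under the canonical embedding ℚ ∩ ℤ_p → ℤ_p, then α is not a p-adic Liouville number. -/
open Filter

/-- A `p`-adic integer `α` is a `p`-adic Liouville number if
`liminf ‖n - α‖^(1/n) < 1` or `liminf ‖n + α‖^(1/n) < 1`. -/
def IsPadicLiouville (p : ℕ) [Fact p.Prime] (α : ℤ_[p]) : Prop :=
  liminf (fun n : ℕ => ‖(n : ℤ_[p]) - α‖ ^ ((1 : ℝ) / n)) atTop < 1 ∨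
  liminf (fun n : ℕ => ‖(n : ℤ_[p]) + α‖ ^ ((1 : ℝ) / n)) atTop < 1

/-!
If `α = a / b`, then for large `n` the integer `b n - a = b (n - α)` is nonzero and at most `n²`.
The `p`-adic norm of a nonzero integer is at least its reciprocal and `‖b‖ ≤ 1`, so
`‖n - α‖ ≥ n⁻²` eventually, and `(n⁻²)^(1/n) → 1`. The case `n + α` is the case `n - (-α)`.
-/

theorem one_le_liminf_rpow_one_div_of_inv_pow_le {u : ℕ → ℝ} (hu₀ : ∀ n, 0 ≤ u n)
    (hu₁ : ∀ n, u n ≤ 1) (k : ℕ) (hu : ∀ᶠ n : ℕ in atTop, ((n : ℝ) ^ k)⁻¹ ≤ u n) :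
    1 ≤ liminf (fun n : ℕ => u n ^ ((1 : ℝ) / n)) atTop := by
  have hlim : Tendsto (fun n : ℕ => (((n : ℝ) ^ k)⁻¹) ^ ((1 : ℝ) / n)) atTop (nhds 1) := by
    have hroot : Tendsto (fun n : ℕ => (n : ℝ) ^ ((1 : ℝ) / n)) atTop (nhds 1) :=
      tendsto_rpow_div.comp tendsto_natCast_atTop_atTop
    have := (hroot.pow k).inv₀ (by norm_num)
    simp only [one_pow, inv_one] at this
    refine this.congr fun n => ?_
    rw [Real.inv_rpow (by positivity), Real.rpow_pow_comm (Nat.cast_nonneg n)]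
  have hbdd : IsBoundedUnder (· ≤ ·) atTop fun n : ℕ => u n ^ ((1 : ℝ) / n) :=
    isBoundedUnder_of ⟨1, fun n => Real.rpow_le_one (hu₀ n) (hu₁ n) (by positivity)⟩
  refine hlim.liminf_eq.symm.trans_le <|
    liminf_le_liminf ?_ hlim.isBoundedUnder_ge hbdd.isCoboundedUnder_ge
  filter_upwards [hu] with n hn
  exact Real.rpow_le_rpow (by positivity) hn (by positivity)

namespace Padic

variable {p : ℕ} [Fact p.Prime]

theorem inv_abs_le_norm_intCast {m : ℤ} (hm : m ≠ 0) : |(m : ℝ)|⁻¹ ≤ ‖(m : ℚ_[p])‖ := by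
  rw [norm_eq_zpow_neg_valuation (by exact_mod_cast hm), valuation_intCast, zpow_neg,
    zpow_natCast]
  refine inv_anti₀ (pow_pos (mod_cast (Fact.out : p.Prime).pos) _) ?_
  have := Int.le_of_dvd (abs_pos.mpr hm) ((dvd_abs _ _).mpr (padicValInt_dvd (p := p) m))
  rw [← Int.cast_abs]
  exact_mod_cast this

theorem norm_intCast_mul_den_sub_num_le (m : ℤ) (q : ℚ) :
    ‖((m * q.den - q.num : ℤ) : ℚ_[p])‖ ≤ ‖(m : ℚ_[p]) - q‖ := by
  have hden : ((m * q.den - q.num : ℤ) : ℚ_[p]) = ((m : ℚ_[p]) - q) * (q.den : ℤ) := by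
    have : ((m * q.den - q.num : ℤ) : ℚ) = ((m : ℚ) - q) * (q.den : ℤ) := by
      push_cast
      rw [sub_mul, Rat.mul_den_eq_num]
    exact_mod_cast congrArg (fun x : ℚ => (x : ℚ_[p])) this
  rw [hden, norm_mul]
  exact mul_le_of_le_one_right (norm_nonneg _) (norm_int_le_one _)

theorem eventually_inv_sq_le_norm_natCast_sub_ratCast (q : ℚ) :
    ∀ᶠ n : ℕ in atTop, ((n : ℝ) ^ 2)⁻¹ ≤ ‖(n : ℚ_[p]) - q‖ := by
  filter_upwards [eventually_ge_atTop (q.den + q.num.natAbs + 1)] with n hn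
  have hn' : (q.den : ℤ) + |q.num| + 1 ≤ n := by
    rw [Int.abs_eq_natAbs]; exact_mod_cast hn
  have hden : (1 : ℤ) ≤ q.den := by exact_mod_cast q.pos
  set N : ℤ := n * q.den - q.num
  have hN : 0 < N := by nlinarith [le_abs_self q.num, abs_nonneg q.num]
  have hNn : N ≤ (n : ℤ) ^ 2 := by nlinarith [neg_abs_le q.num, abs_nonneg q.num]
  calc ((n : ℝ) ^ 2)⁻¹ ≤ |(N : ℝ)|⁻¹ := by
        rw [← Int.cast_abs, abs_of_pos hN]
        exact inv_anti₀ (by exact_mod_cast hN) (by exact_mod_cast hNn)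
    _ ≤ ‖(N : ℚ_[p])‖ := inv_abs_le_norm_intCast hN.ne'
    _ ≤ ‖(n : ℚ_[p]) - q‖ := by exact_mod_cast norm_intCast_mul_den_sub_num_le (n : ℤ) q

end Padic

theorem PadicInt.one_le_liminf_norm_natCast_sub_rpow {p : ℕ} [Fact p.Prime] {α : ℤ_[p]} {q : ℚ}
    (hq : (q : ℚ_[p]) = α) :
    1 ≤ liminf (fun n : ℕ => ‖(n : ℤ_[p]) - α‖ ^ ((1 : ℝ) / n)) atTop := by
  refine one_le_liminf_rpow_one_div_of_inv_pow_le (fun _ => norm_nonneg _)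
    (fun _ => PadicInt.norm_le_one _) 2 ?_
  simpa [PadicInt.norm_def, ← hq] using
    Padic.eventually_inv_sq_le_norm_natCast_sub_ratCast (p := p) q

/-- A `p`-adic integer coming from a rational number is not a `p`-adic Liouville number. -/
theorem not_isPadicLiouville_of_rat (p : ℕ) [Fact p.Prime] (α : ℤ_[p])
    (h : ∃ q : ℚ, ((q : ℚ_[p]) = (α : ℚ_[p]))) :
    ¬ IsPadicLiouville p α := by
  obtain ⟨q, hq⟩ := h
  rintro (hsub | hadd)
  · exact (PadicInt.one_le_liminf_norm_natCast_sub_rpow hq).not_gt hsub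
  · have hneg : ((-q : ℚ) : ℚ_[p]) = ((-α : ℤ_[p]) : ℚ_[p]) := by push_cast [hq]; rfl
    refine (PadicInt.one_le_liminf_norm_natCast_sub_rpow hneg).not_gt ?_
    simpa only [sub_neg_eq_add] using hadd
end

section
/- Let α ∈ ℤ_p be a p-adic integer that is not a nonnegative integer and is not a p-adic Liouville number. Then for every real number η with 0 < η < 1, the sequence η^n / |n − α|_p tends to 0 as n → ∞. -/
/-!
Not being Liouville says `liminf ‖n - α‖ ^ (1/n) ≥ 1`, so for any `c < 1` eventually
`‖n - α‖ > c ^ n`. Choosing `η < c < 1` bounds `η ^ n / ‖n - α‖` by the geometric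
sequence `(η / c) ^ n`.
-/

open Filter

open Topology

lemma eventually_pow_lt_of_lt_liminf_rpow {a : ℕ → ℝ} (ha : ∀ n, 0 ≤ a n) {c : ℝ}
    (hc : 0 ≤ c) (h : c < liminf (fun n : ℕ => a n ^ ((1 : ℝ) / n)) atTop) :
    ∀ᶠ n in atTop, c ^ n < a n := by
  have hroot : ∀ᶠ n : ℕ in atTop, c < a n ^ ((1 : ℝ) / n) :=
    eventually_lt_of_lt_liminf h
      (isBoundedUnder_of_eventually_ge (.of_forall fun n => Real.rpow_nonneg (ha n) _))
  filter_upwards [hroot, eventually_ne_atTop 0] with n hn hn0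
  calc c ^ n < (a n ^ ((1 : ℝ) / n)) ^ n := pow_lt_pow_left₀ hn hc hn0
    _ = a n := by rw [one_div, Real.rpow_inv_natCast_pow (ha n) hn0]

lemma tendsto_pow_div_of_one_le_liminf_rpow {a : ℕ → ℝ} (ha : ∀ n, 0 ≤ a n)
    (h : 1 ≤ liminf (fun n : ℕ => a n ^ ((1 : ℝ) / n)) atTop) {η : ℝ} (h0 : 0 ≤ η)
    (h1 : η < 1) : Tendsto (fun n => η ^ n / a n) atTop (𝓝 0) := by
  obtain ⟨c, hηc, hc1⟩ := exists_between h1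
  have hc : 0 < c := h0.trans_lt hηc
  have hbound : ∀ᶠ n in atTop, η ^ n / a n ≤ (η / c) ^ n := by
    filter_upwards [eventually_pow_lt_of_lt_liminf_rpow ha hc.le (hc1.trans_le h)] with n hn
    rw [div_pow]
    exact div_le_div_of_nonneg_left (by positivity) (by positivity) hn.le
  exact squeeze_zero' (.of_forall fun n => div_nonneg (pow_nonneg h0 n) (ha n)) hbound
    (tendsto_pow_atTop_nhds_zero_of_lt_one (div_nonneg h0 hc.le) ((div_lt_one hc).2 hηc))

theorem tendsto_pow_div_norm_sub_of_not_liouville_general (p : ℕ) [Fact p.Prime] (α : ℤ_[p])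
    (hL : ¬ IsPadicLiouville p α)
    (η : ℝ) (h0 : 0 < η) (h1 : η < 1) :
    Tendsto (fun n : ℕ => η ^ n / ‖(n : ℤ_[p]) - α‖) atTop (nhds 0) :=
  tendsto_pow_div_of_one_le_liminf_rpow (fun _ => norm_nonneg _)
    (not_lt.1 fun h => hL (Or.inl h)) h0.le h1

/-- If `α ∈ ℤ_p` is neither a nonnegative integer nor a `p`-adic Liouville number, then
for every `0 < η < 1`, `η^n / ‖n - α‖ → 0`. -/
theorem tendsto_pow_div_norm_sub_of_not_liouville (p : ℕ) [Fact p.Prime] (α : ℤ_[p])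
    (hnat : ∀ n : ℕ, (n : ℤ_[p]) ≠ α) (hL : ¬ IsPadicLiouville p α)
    (η : ℝ) (h0 : 0 < η) (h1 : η < 1) :
    Tendsto (fun n : ℕ => η ^ n / ‖(n : ℤ_[p]) - α‖) atTop (nhds 0) :=
  tendsto_pow_div_norm_sub_of_not_liouville_general p α hL η h0 h1
end

section
/- Let e_1, …, e_s ∈ ℤ_p be p-adic integers, each of which is neither a positive integer nor a p-adic Liouville number, and let m_1, …, m_s be positive natural numbers. Set φ(X) = ∏_i (X − e_i)^{m_i}. Then φ(j) ≠ 0 for every positive integer j, and for every real η with 0 < η < 1 the sequence η^j / |φ(j)|_p tends to 0 as j → ∞. -/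
/-!
A sequence `a` with `1 ≤ liminf a n ^ (1/n)` decays more slowly than every geometric sequence:
`η ^ n / a n → 0` for `0 < η < 1`, since eventually `a n > (√η) ^ n`. Such sequences form a
multiplicative monoid, because `η ^ n / (a n * b n) = ((√η) ^ n / a n) * ((√η) ^ n / b n)`.
For a non-Liouville `e` the sequence `‖n - e‖` is of this kind, hence so is `‖φ(n)‖`, a finite
product of powers of such sequences.
-/

open Filter

open Topology

def slowlyDecaying : Submonoid (ℕ → ℝ) where
  carrier := {a | ∀ η : ℝ, 0 < η → η < 1 → Tendsto (fun n => η ^ n / a n) atTop (𝓝 0)}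
  one_mem' _ hη0 hη1 := by
    simpa using tendsto_pow_atTop_nhds_zero_of_lt_one hη0.le hη1
  mul_mem' {a b} ha hb η hη0 hη1 := by
    have hsqrt0 : 0 < √η := Real.sqrt_pos.mpr hη0
    have hsqrt1 : √η < 1 := by rwa [Real.sqrt_lt' one_pos, one_pow]
    have hsplit : ∀ n : ℕ, η ^ n / (a * b) n = ((√η) ^ n / a n) * ((√η) ^ n / b n) := by
      intro n
      rw [div_mul_div_comm, ← mul_pow, Real.mul_self_sqrt hη0.le, Pi.mul_apply]
    simpa only [hsplit, mul_zero] using (ha _ hsqrt0 hsqrt1).mul (hb _ hsqrt0 hsqrt1)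

theorem mem_slowlyDecaying_of_one_le_liminf {a : ℕ → ℝ} (ha : ∀ n, 0 ≤ a n)
    (hlim : 1 ≤ liminf (fun n : ℕ => a n ^ ((1 : ℝ) / n)) atTop) : a ∈ slowlyDecaying := by
  intro η hη0 hη1
  have hsqrt0 : 0 < √η := Real.sqrt_pos.mpr hη0
  have hsqrt1 : √η < 1 := by rwa [Real.sqrt_lt' one_pos, one_pow]
  have hbdd : IsBoundedUnder (· ≥ ·) atTop (fun n : ℕ => a n ^ ((1 : ℝ) / n)) :=
    isBoundedUnder_of_eventually_ge (Eventually.of_forall fun n => Real.rpow_nonneg (ha n) _)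
  have hroot : ∀ᶠ n : ℕ in atTop, √η < a n ^ ((1 : ℝ) / n) :=
    eventually_lt_of_lt_liminf (hsqrt1.trans_le hlim) hbdd
  have hgeom : ∀ᶠ n : ℕ in atTop, (√η) ^ n < a n := by
    filter_upwards [hroot, eventually_ne_atTop 0] with n hn hn0
    calc (√η) ^ n < (a n ^ ((n : ℝ)⁻¹)) ^ n := by
          rw [← one_div]; exact pow_lt_pow_left₀ hn hsqrt0.le hn0
      _ = a n := Real.rpow_inv_natCast_pow (ha n) hn0
  have hle : ∀ᶠ n : ℕ in atTop, η ^ n / a n ≤ (√η) ^ n := by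
    filter_upwards [hgeom] with n hn
    calc η ^ n / a n ≤ (√η * √η) ^ n / (√η) ^ n := by rw [Real.mul_self_sqrt hη0.le]; gcongr
      _ = (√η) ^ n := by rw [mul_pow, mul_div_cancel_right₀ _ (by positivity)]
  exact squeeze_zero' (Eventually.of_forall fun n => div_nonneg (by positivity) (ha n)) hle
    (tendsto_pow_atTop_nhds_zero_of_lt_one hsqrt0.le hsqrt1)

theorem norm_natCast_sub_mem_slowlyDecaying {p : ℕ} [Fact p.Prime] {α : ℤ_[p]}
    (hα : ¬ IsPadicLiouville p α) : (fun n : ℕ => ‖(n : ℤ_[p]) - α‖) ∈ slowlyDecaying :=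
  mem_slowlyDecaying_of_one_le_liminf (fun _ => norm_nonneg _)
    (not_lt.mp fun h => hα (Or.inl h))

theorem tendsto_pow_div_norm_charpoly_eval_general (p : ℕ) [Fact p.Prime] {s : ℕ}
    (e : Fin s → ℤ_[p]) (m : Fin s → ℕ)
    (hpos : ∀ i, ∀ k : ℕ, 0 < k → (k : ℤ_[p]) ≠ e i)
    (hL : ∀ i, ¬ IsPadicLiouville p (e i)) :
    (∀ j : ℕ, 0 < j → (∏ i, ((j : ℤ_[p]) - e i) ^ m i) ≠ 0) ∧
      ∀ η : ℝ, 0 < η → η < 1 →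
        Tendsto (fun j : ℕ => η ^ j / ‖∏ i, ((j : ℤ_[p]) - e i) ^ m i‖)
          atTop (nhds 0) := by
  refine ⟨fun j hj => Finset.prod_ne_zero_iff.mpr fun i _ =>
    pow_ne_zero _ (sub_ne_zero.mpr (hpos i j hj)), ?_⟩
  have hnorm : (fun j : ℕ => ‖∏ i, ((j : ℤ_[p]) - e i) ^ m i‖) =
      ∏ i, (fun j : ℕ => ‖(j : ℤ_[p]) - e i‖) ^ m i := by
    ext j
    simp only [norm_prod, norm_pow, Finset.prod_apply, Pi.pow_apply]
  have hmem : (fun j : ℕ => ‖∏ i, ((j : ℤ_[p]) - e i) ^ m i‖) ∈ slowlyDecaying := by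
    rw [hnorm]
    exact prod_mem fun i _ => pow_mem (norm_natCast_sub_mem_slowlyDecaying (hL i)) _
  exact hmem

/-- If each `e i` is neither a positive integer nor a `p`-adic Liouville number, then
`φ(j) = ∏ (j - e i)^(m i)` is nonzero for positive `j` and `η^j / ‖φ(j)‖ → 0` for
`0 < η < 1`. -/
theorem tendsto_pow_div_norm_charpoly_eval (p : ℕ) [Fact p.Prime] {s : ℕ}
    (e : Fin s → ℤ_[p]) (m : Fin s → ℕ) (hm : ∀ i, 0 < m i)
    (hpos : ∀ i, ∀ k : ℕ, 0 < k → (k : ℤ_[p]) ≠ e i)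
    (hL : ∀ i, ¬ IsPadicLiouville p (e i)) :
    (∀ j : ℕ, 0 < j → (∏ i, ((j : ℤ_[p]) - e i) ^ m i) ≠ 0) ∧
      ∀ η : ℝ, 0 < η → η < 1 →
        Tendsto (fun j : ℕ => η ^ j / ‖∏ i, ((j : ℤ_[p]) - e i) ^ m i‖)
          atTop (nhds 0) :=
  tendsto_pow_div_norm_charpoly_eval_general p e m hpos hL
end

section
/- Let K be a complete field extension of ℚ_p with a multiplicative nonarchimedean absolute value extending |·|_p, and let α ∈ ℤ_p ⊆ K be neither a positive integer nor a p-adic Liouville number. Let V be the K-vector space of sequences a : ℕ≥1 → K such that there exists μ ∈ (0,1) with |a_j|/μ^j → 0 as j → ∞. Then the K-linear map T : V → V defined by (T a)_j = (α − j)·a_j is bijective. -/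
/-!
Since `α ∈ ℤ_p`, every factor `c_j = α - (j + 1)` has norm at most `1`, and it is nonzero because
`α` is not a positive integer. Not being Liouville means `‖n - α‖ > r ^ n` eventually for every
`r < 1`, so `‖c_j‖⁻¹` grows subexponentially. Multiplication by a sequence of subexponential
growth preserves `DecaySeq K`, at the price of enlarging the decay rate `μ` to any `μ' ∈ (μ, 1)`;
hence multiplication by `c` and by `c⁻¹` are mutually inverse maps of `DecaySeq K`.
-/

open Filter

/-- The space of sequences `(a_j)_{j ≥ 1}` in `K` such that `‖a_j‖/μ^j → 0` for some
`μ ∈ (0,1)`.  (Here the sequence `a : ℕ → K` records `a_{j+1}` at index `j`.) -/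
def DecaySeq (K : Type*) [NormedField K] : Set (ℕ → K) :=
  {a | ∃ μ : ℝ, 0 < μ ∧ μ < 1 ∧
    Tendsto (fun j : ℕ => ‖a j‖ / μ ^ j) atTop (nhds 0)}

open Topology

def IsSubexponential (f : ℕ → ℝ) : Prop :=
  ∀ r : ℝ, 0 < r → r < 1 → Tendsto (fun n => r ^ n * f n) atTop (𝓝 0)

namespace IsSubexponential

theorem of_norm_le {f : ℕ → ℝ} (C : ℝ) (hf : ∀ n, ‖f n‖ ≤ C) : IsSubexponential f :=
  fun _ hr0 hr1 => (tendsto_pow_atTop_nhds_zero_of_lt_one hr0.le hr1).zero_mul_isBoundedUnder_le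
    (isBoundedUnder_of ⟨C, hf⟩)

theorem comp_add_one {f : ℕ → ℝ} (hf : IsSubexponential f) :
    IsSubexponential (fun n => f (n + 1)) := by
  intro r hr0 hr1
  have hshift := ((hf r hr0 hr1).comp (tendsto_add_atTop_nat 1)).const_mul r⁻¹
  rw [mul_zero] at hshift
  refine hshift.congr fun n => ?_
  simp only [Function.comp_apply, pow_succ]
  field_simp

theorem inv_of_eventually_pow_lt {x : ℕ → ℝ}
    (hx : ∀ r : ℝ, 0 < r → r < 1 → ∀ᶠ n in atTop, r ^ n < x n) :
    IsSubexponential (fun n => (x n)⁻¹) := by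
  intro r hr0 hr1
  obtain ⟨r', hrr', hr'1⟩ := exists_between hr1
  have hr'0 : 0 < r' := hr0.trans hrr'
  have hgeom : Tendsto (fun n => (r / r') ^ n) atTop (𝓝 0) :=
    tendsto_pow_atTop_nhds_zero_of_lt_one (by positivity) ((div_lt_one hr'0).mpr hrr')
  refine squeeze_zero' ?_ ?_ hgeom
  · filter_upwards [hx r' hr'0 hr'1] with n hn
    have : 0 < x n := (pow_pos hr'0 n).trans hn
    positivity
  · filter_upwards [hx r' hr'0 hr'1] with n hn
    rw [div_pow, ← div_eq_mul_inv]
    exact div_le_div_of_nonneg_left (by positivity) (pow_pos hr'0 n) hn.le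

end IsSubexponential

namespace DecaySeq

variable {K : Type*} [NormedField K]

theorem mul_mem {c a : ℕ → K} (hc : IsSubexponential (fun j => ‖c j‖)) (ha : a ∈ DecaySeq K) :
    (fun j => c j * a j) ∈ DecaySeq K := by
  obtain ⟨μ, hμ0, hμ1, ha⟩ := ha
  obtain ⟨μ', hμμ', hμ'1⟩ := exists_between hμ1
  have hμ'0 : 0 < μ' := hμ0.trans hμμ'
  refine ⟨μ', hμ'0, hμ'1, ?_⟩
  have hprod := ha.mul (hc (μ / μ') (by positivity) ((div_lt_one hμ'0).mpr hμμ'))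
  rw [mul_zero] at hprod
  refine hprod.congr fun j => ?_
  rw [norm_mul, div_pow]
  field_simp

theorem bijOn_mul {c : ℕ → K} (hc0 : ∀ j, c j ≠ 0) (hc : IsSubexponential (fun j => ‖c j‖))
    (hc_inv : IsSubexponential (fun j => ‖c j‖⁻¹)) :
    Set.BijOn (fun (a : ℕ → K) j => c j * a j) (DecaySeq K) (DecaySeq K) := by
  refine ⟨fun a ha => mul_mem hc ha, fun a _ b _ hab => ?_, fun b hb => ?_⟩
  · funext j
    exact mul_left_cancel₀ (hc0 j) (congrFun hab j)
  · refine ⟨fun j => (c j)⁻¹ * b j, mul_mem (by simpa only [norm_inv] using hc_inv) hb, ?_⟩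
    funext j
    exact mul_inv_cancel_left₀ (hc0 j) (b j)

end DecaySeq

section Padic

variable {p : ℕ} [Fact p.Prime]

theorem eventually_pow_lt_norm_natCast_sub_of_not_isPadicLiouville {α : ℤ_[p]}
    (hL : ¬ IsPadicLiouville p α) {r : ℝ} (hr0 : 0 < r) (hr1 : r < 1) :
    ∀ᶠ n : ℕ in atTop, r ^ n < ‖(n : ℤ_[p]) - α‖ := by
  have hliminf : 1 ≤ liminf (fun n : ℕ => ‖(n : ℤ_[p]) - α‖ ^ ((1 : ℝ) / n)) atTop :=
    not_lt.mp fun h => hL (Or.inl h)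
  have hroot : ∀ᶠ n : ℕ in atTop, r < ‖(n : ℤ_[p]) - α‖ ^ ((1 : ℝ) / n) :=
    eventually_lt_of_lt_liminf (hr1.trans_le hliminf)
      (isBoundedUnder_of ⟨0, fun n => Real.rpow_nonneg (norm_nonneg _) _⟩)
  filter_upwards [hroot, eventually_gt_atTop 0] with n hn hn0
  rwa [one_div, Real.lt_rpow_inv_iff_of_pos hr0.le (norm_nonneg _) (by exact_mod_cast hn0),
    Real.rpow_natCast] at hn

theorem norm_algebraMap_sub_natCast {K : Type*} [NormedField K] [NormedAlgebra ℚ_[p] K]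
    (hext : ∀ q : ℚ_[p], ‖algebraMap ℚ_[p] K q‖ = ‖q‖) (α : ℤ_[p]) (n : ℕ) :
    ‖algebraMap ℚ_[p] K (α : ℚ_[p]) - n‖ = ‖(n : ℤ_[p]) - α‖ := by
  rw [← map_natCast (algebraMap ℚ_[p] K), ← map_sub, hext, norm_sub_rev, PadicInt.norm_def]
  push_cast
  rfl

end Padic

theorem bijOn_mul_sub_of_not_liouville_general (p : ℕ) [Fact p.Prime]
    {K : Type*} [NontriviallyNormedField K] [NormedAlgebra ℚ_[p] K]
    (hext : ∀ q : ℚ_[p], ‖algebraMap ℚ_[p] K q‖ = ‖q‖)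
    (α : ℤ_[p]) (hpos : ∀ k : ℕ, 0 < k → (k : ℤ_[p]) ≠ α)
    (hL : ¬ IsPadicLiouville p α) :
    Set.BijOn
      (fun (a : ℕ → K) (j : ℕ) =>
        (algebraMap ℚ_[p] K (α : ℚ_[p]) - ((j : K) + 1)) * a j)
      (DecaySeq K) (DecaySeq K) := by
  have hnorm (j : ℕ) : ‖algebraMap ℚ_[p] K (α : ℚ_[p]) - ((j : K) + 1)‖
      = ‖((j + 1 : ℕ) : ℤ_[p]) - α‖ := by
    rw [← norm_algebraMap_sub_natCast hext, Nat.cast_succ]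
  refine DecaySeq.bijOn_mul (fun j h => ?_) (.of_norm_le 1 fun j => ?_) ?_
  · rw [← norm_eq_zero, hnorm, norm_eq_zero, sub_eq_zero] at h
    exact hpos (j + 1) j.succ_pos h
  · rw [norm_norm, hnorm]
    exact PadicInt.norm_le_one _
  · simp only [hnorm]
    exact (IsSubexponential.inv_of_eventually_pow_lt fun r hr0 hr1 =>
      eventually_pow_lt_norm_natCast_sub_of_not_isPadicLiouville hL hr0 hr1).comp_add_one

/-- Let `K` be a complete nonarchimedean field extension of `ℚ_p`, and `α ∈ ℤ_p` neither a
positive integer nor a `p`-adic Liouville number.  Then the operator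
`(a_j)_{j ≥ 1} ↦ ((α - j)·a_j)_{j ≥ 1}` is a bijection of the space `V` of sequences with
`‖a_j‖/μ^j → 0` for some `μ ∈ (0,1)`. -/
theorem bijOn_mul_sub_of_not_liouville (p : ℕ) [Fact p.Prime]
    {K : Type*} [NontriviallyNormedField K] [CompleteSpace K] [NormedAlgebra ℚ_[p] K]
    (hna : ∀ x y : K, ‖x + y‖ ≤ max ‖x‖ ‖y‖)
    (hext : ∀ q : ℚ_[p], ‖algebraMap ℚ_[p] K q‖ = ‖q‖)
    (α : ℤ_[p]) (hpos : ∀ k : ℕ, 0 < k → (k : ℤ_[p]) ≠ α)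
    (hL : ¬ IsPadicLiouville p α) :
    Set.BijOn
      (fun (a : ℕ → K) (j : ℕ) =>
        (algebraMap ℚ_[p] K (α : ℚ_[p]) - ((j : K) + 1)) * a j)
      (DecaySeq K) (DecaySeq K) :=
  bijOn_mul_sub_of_not_liouville_general p hext α hpos hL
end
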